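/- arXiv:2302.04336 — 3 statements merged into one kernel-verified Lean document; each statement's English description precedes it below -/
import Mathlib

section
/- For vectors v, x in ℝ^d with ‖x‖ = 1 and α ≥ 0, if v + 2αx ≠ 0 then the unique maximizer of the function x' ↦ vᵀx' - α‖x' - x‖² over the unit sphere {x' : ‖x'‖ = 1} is x* = (v + 2αx)/‖v + 2αx‖. -/
/-!
On the unit sphere the quadratic cost is affine in `x'`: expanding
`‖x' - x‖² = 2 - 2⟪x, x'⟫` turns the objective into `⟪v + 2αx, x'⟫ - 2α`. A nonzero linear
functional `⟪w, ·⟫` attains its maximum `‖w‖` over the unit sphere only at `w / ‖w‖`, by the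
equality case of Cauchy–Schwarz.
-/

open scoped RealInnerProductSpace

section

variable {E : Type*} [NormedAddCommGroup E] [InnerProductSpace ℝ E]

lemma inner_sub_mul_norm_sub_sq (v x y : E) (α : ℝ) :
    ⟪v, y⟫ - α * ‖y - x‖ ^ 2 = ⟪v + (2 * α) • x, y⟫ - α * (‖y‖ ^ 2 + ‖x‖ ^ 2) := by
  rw [norm_sub_sq_real, inner_add_left, real_inner_smul_left, real_inner_comm x y]
  ring

lemma real_inner_inv_norm_smul_self (w : E) : ⟪w, ‖w‖⁻¹ • w⟫ = ‖w‖ := by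
  rcases eq_or_ne w 0 with rfl | hw
  · simp
  · rw [real_inner_smul_right, real_inner_self_eq_norm_sq]
    field_simp [norm_ne_zero_iff.mpr hw]

lemma real_inner_lt_norm_of_norm_eq_one_of_ne {w y : E} (hw : w ≠ 0) (hy : ‖y‖ = 1)
    (hne : y ≠ ‖w‖⁻¹ • w) : ⟪w, y⟫ < ‖w‖ := by
  have hcs : ⟪w, y⟫ < ‖w‖ * ‖y‖ := by
    rw [inner_lt_norm_mul_iff_real, hy, one_smul]
    exact fun h => hne ((eq_inv_smul_iff₀ (norm_ne_zero_iff.mpr hw)).mpr h.symm)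
  rwa [hy, mul_one] at hcs

end

theorem stmt_2_general (d : ℕ) (v x : EuclideanSpace ℝ (Fin d)) (α : ℝ)
    (hx : ‖x‖ = 1) (hne : v + (2 * α) • x ≠ 0) :
    ‖‖v + (2 * α) • x‖⁻¹ • (v + (2 * α) • x)‖ = 1 ∧
    ∀ x' : EuclideanSpace ℝ (Fin d), ‖x'‖ = 1 →
      x' ≠ ‖v + (2 * α) • x‖⁻¹ • (v + (2 * α) • x) →
      ⟪v, x'⟫ - α * ‖x' - x‖ ^ 2 <
        ⟪v, ‖v + (2 * α) • x‖⁻¹ • (v + (2 * α) • x)⟫ -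
          α * ‖‖v + (2 * α) • x‖⁻¹ • (v + (2 * α) • x) - x‖ ^ 2 := by
  have hunit : ‖‖v + (2 * α) • x‖⁻¹ • (v + (2 * α) • x)‖ = 1 := norm_smul_inv_norm hne
  refine ⟨hunit, fun x' hx' hne' => ?_⟩
  rw [inner_sub_mul_norm_sub_sq, inner_sub_mul_norm_sub_sq, hx', hunit, hx,
    real_inner_inv_norm_smul_self]
  linarith [real_inner_lt_norm_of_norm_eq_one_of_ne hne hx' hne']

theorem stmt_2 (d : ℕ) (v x : EuclideanSpace ℝ (Fin d)) (α : ℝ)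
    (hx : ‖x‖ = 1) (hα : 0 ≤ α) (hne : v + (2 * α) • x ≠ 0) :
    ‖‖v + (2 * α) • x‖⁻¹ • (v + (2 * α) • x)‖ = 1 ∧
    ∀ x' : EuclideanSpace ℝ (Fin d), ‖x'‖ = 1 →
      x' ≠ ‖v + (2 * α) • x‖⁻¹ • (v + (2 * α) • x) →
      ⟪v, x'⟫ - α * ‖x' - x‖ ^ 2 <
        ⟪v, ‖v + (2 * α) • x‖⁻¹ • (v + (2 * α) • x)⟫ -
          α * ‖‖v + (2 * α) • x‖⁻¹ • (v + (2 * α) • x) - x‖ ^ 2 :=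
  stmt_2_general d v x α hx hne
end

section
/- Let d ≥ 2 and let n > 1. Suppose items x₁ and x₂ have user sets U₁ = U ∪ {u₁} and U₂ = U ∪ {u₂} where U is a set of n shared users. Then there exists an assignment of unit-norm embeddings to all users such that, after each item best-responds with α = 0 to the normalized average of its users' embeddings, the diversity of the two resulting items equals 1 (i.e., they are antipodal). -/
/-!
The `n` shared users are placed at the `n`-th roots of unity in a plane of `ℝᵈ`, so their
embeddings sum to zero. Taking `u₂ = -u₁`, the two average embeddings are `v` and `-v` for
some `v ≠ 0`, whose normalizations are antipodal, so their diversity is `(1 - (-1)) / 2 = 1`.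
-/

open scoped RealInnerProductSpace

open Module

theorem Complex.exists_norm_eq_one_sum_eq_zero {n : ℕ} (hn : 1 < n) :
    ∃ z : Fin n → ℂ, (∀ i, ‖z i‖ = 1) ∧ ∑ i, z i = 0 := by
  obtain ⟨ζ, hζ⟩ : ∃ ζ : ℂ, IsPrimitiveRoot ζ n :=
    ⟨_, Complex.isPrimitiveRoot_exp n (by omega)⟩
  refine ⟨fun i => ζ ^ (i : ℕ), fun i => ?_, ?_⟩
  · rw [norm_pow, hζ.norm'_eq_one (by omega), one_pow]
  · rw [Fin.sum_univ_eq_sum_range (ζ ^ ·), hζ.geom_sum_eq_zero hn]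

section

variable {E : Type*} [NormedAddCommGroup E] [InnerProductSpace ℝ E]

theorem exists_linearIsometry_complex_of_two_le_finrank (hE : 2 ≤ finrank ℝ E) :
    Nonempty (ℂ →ₗᵢ[ℝ] E) := by
  have : FiniteDimensional ℝ E := finite_of_finrank_pos (by omega)
  let v : Fin 2 → E := stdOrthonormalBasis ℝ E ∘ Fin.castLE hE
  have hv : Orthonormal ℝ v :=
    (stdOrthonormalBasis ℝ E).orthonormal.comp _ (Fin.castLE_injective hE)
  let B := Complex.orthonormalBasisOneI
  have hBv : B.toBasis.constr ℝ v ∘ B.toBasis = v := funext (B.toBasis.constr_basis ℝ v)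
  exact ⟨(B.toBasis.constr ℝ v).isometryOfOrthonormal (v := B.toBasis) B.orthonormal
    (hBv.symm ▸ hv)⟩

theorem exists_norm_eq_one_sum_eq_zero (hE : 2 ≤ finrank ℝ E) {n : ℕ} (hn : 1 < n) :
    ∃ e : Fin n → E, (∀ i, ‖e i‖ = 1) ∧ ∑ i, e i = 0 := by
  obtain ⟨f⟩ := exists_linearIsometry_complex_of_two_le_finrank hE
  obtain ⟨z, hz, hsum⟩ := Complex.exists_norm_eq_one_sum_eq_zero hn
  exact ⟨fun i => f (z i), fun i => by rw [f.norm_map, hz], by rw [← map_sum, hsum, map_zero]⟩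

theorem inner_inv_norm_smul_neg_self {v : E} (hv : v ≠ 0) :
    ⟪‖v‖⁻¹ • v, ‖-v‖⁻¹ • -v⟫ = -1 := by
  have hv' : ‖v‖ ≠ 0 := norm_ne_zero_iff.mpr hv
  rw [norm_neg, smul_neg, inner_neg_right, real_inner_smul_left, real_inner_smul_right,
    real_inner_self_eq_norm_sq]
  field_simp

end

/-- With `n > 1` shared users and one distinguishing user per item, there exist
unit-norm user embeddings such that, after each item best-responds (with `α = 0`)
to the normalized average of its users' embeddings, the diversity of the two
resulting items equals 1. With `α = 0` the best response to the normalized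
average `ṽⱼ` is exactly `ṽⱼ`. -/
theorem stmt_5 (d n : ℕ) (hd : 2 ≤ d) (hn : 1 < n) :
    ∃ (e : Fin n → EuclideanSpace ℝ (Fin d)) (u₁ u₂ : EuclideanSpace ℝ (Fin d)),
      (∀ i, ‖e i‖ = 1) ∧ ‖u₁‖ = 1 ∧ ‖u₂‖ = 1 ∧
      ∀ v₁ v₂ : EuclideanSpace ℝ (Fin d),
        v₁ = ((n : ℝ) + 1)⁻¹ • (∑ i, e i + u₁) →
        v₂ = ((n : ℝ) + 1)⁻¹ • (∑ i, e i + u₂) →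
        v₁ ≠ 0 ∧ v₂ ≠ 0 ∧
        (1 - ⟪‖v₁‖⁻¹ • v₁, ‖v₂‖⁻¹ • v₂⟫) / 2 = 1 := by
  obtain ⟨e, he, hsum⟩ :=
    exists_norm_eq_one_sum_eq_zero (E := EuclideanSpace ℝ (Fin d)) (by simpa using hd) hn
  set u := e ⟨0, by omega⟩
  refine ⟨e, u, -u, he, he _, by rw [norm_neg, he], ?_⟩
  rintro v₁ v₂ rfl rfl
  have hv : ((n : ℝ) + 1)⁻¹ • u ≠ 0 :=
    smul_ne_zero (by positivity) (norm_ne_zero_iff.mp (by rw [he]; exact one_ne_zero))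
  rw [hsum, zero_add, zero_add, smul_neg]
  refine ⟨hv, neg_ne_zero.mpr hv, ?_⟩
  rw [inner_inv_norm_smul_neg_self hv]
  norm_num
end

section
/- Let x be a unit vector in ℝ^d and v a unit vector, and for α > 0 define the iteration x_{t+1} = (v + 2α x_t)/‖v + 2α x_t‖ with x₀ = x and v + 2αx_t ≠ 0 for all t. Then, whenever vᵀx₀ > -1, the inner product vᵀx_t is nondecreasing and converges to 1, so that x_t converges to v as t → ∞. -/
open scoped RealInnerProductSpace
open Filter

/-- Key inequality: c * N ≤ 1 + 2αc. -/
lemma stmt_15_key (α c N : ℝ) (hα : 0 < α) (hc1 : -1 ≤ c) (hc2 : c ≤ 1)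
    (hN : 0 < N) (hN2 : N ^ 2 = 1 + 4 * α * c + 4 * α ^ 2) :
    c * N ≤ 1 + 2 * α * c := by
  rcases le_or_gt 0 c with h | h
  · have hNle : N ≤ 1 + 2 * α := by nlinarith
    nlinarith [mul_le_mul_of_nonneg_left hNle h]
  · have hge : c + 2 * α ≤ N := by
      rcases le_or_gt (c + 2 * α) 0 with h' | h'
      · linarith
      · nlinarith
    nlinarith [mul_le_mul_of_nonpos_left hge h.le]

theorem stmt_15 (d : ℕ) (v x₀ : EuclideanSpace ℝ (Fin d))
    (hv : ‖v‖ = 1) (hx₀ : ‖x₀‖ = 1) (α : ℝ) (hα : 0 < α)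
    (x : ℕ → EuclideanSpace ℝ (Fin d)) (hx0 : x 0 = x₀)
    (hne : ∀ t, v + (2 * α) • x t ≠ 0)
    (hrec : ∀ t, x (t + 1) = ‖v + (2 * α) • x t‖⁻¹ • (v + (2 * α) • x t))
    (hinit : -1 < ⟪v, x₀⟫) :
    Monotone (fun t => ⟪v, x t⟫) ∧
    Tendsto (fun t => ⟪v, x t⟫) atTop (nhds 1) := by
  have hxnorm : ∀ t, ‖x t‖ = 1 := by
    intro t
    induction t with
    | zero => rw [hx0]; exact hx₀
    | succ n ih =>
      rw [hrec n, norm_smul, norm_inv, norm_norm,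
        inv_mul_cancel₀ (norm_ne_zero_iff.2 (hne n))]
  have hcbound : ∀ t, |⟪v, x t⟫| ≤ 1 := by
    intro t
    calc |⟪v, x t⟫| ≤ ‖v‖ * ‖x t‖ := abs_real_inner_le_norm _ _
      _ = 1 := by rw [hv, hxnorm t]; ring
  have hNpos : ∀ t, 0 < ‖v + (2 * α) • x t‖ := fun t => norm_pos_iff.2 (hne t)
  have hNsq : ∀ t, ‖v + (2 * α) • x t‖ ^ 2 = 1 + 4 * α * ⟪v, x t⟫ + 4 * α ^ 2 := by
    intro t
    rw [norm_add_sq_real, real_inner_smul_right, norm_smul, hv, hxnorm t]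
    rw [Real.norm_eq_abs, abs_of_pos (by linarith : (0:ℝ) < 2 * α)]
    ring
  have hcsucc : ∀ t, ⟪v, x (t + 1)⟫ = ‖v + (2 * α) • x t‖⁻¹ * (1 + 2 * α * ⟪v, x t⟫) := by
    intro t
    rw [hrec t, real_inner_smul_right, inner_add_right, real_inner_smul_right,
      real_inner_self_eq_norm_sq, hv]
    ring
  -- monotonicity
  have hmono : Monotone (fun t => ⟪v, x t⟫) := by
    apply monotone_nat_of_le_succ
    intro t
    have hb := abs_le.1 (hcbound t)
    have hk := stmt_15_key α ⟪v, x t⟫ (‖v + (2 * α) • x t‖) hα hb.1 hb.2 (hNpos t) (hNsq t)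
    rw [hcsucc t, ← sub_nonneg]
    rw [← sub_nonneg] at hk
    have : ‖v + (2 * α) • x t‖⁻¹ * (1 + 2 * α * ⟪v, x t⟫) - ⟪v, x t⟫
        = ‖v + (2 * α) • x t‖⁻¹ * ((1 + 2 * α * ⟪v, x t⟫) - ⟪v, x t⟫ * ‖v + (2 * α) • x t‖) := by
      field_simp [ne_of_gt (hNpos t)]
    rw [this]
    exact mul_nonneg (inv_nonneg.2 (hNpos t).le) hk
  refine ⟨hmono, ?_⟩
  -- convergence
  have hbdd : BddAbove (Set.range fun t => ⟪v, x t⟫) := by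
    refine ⟨1, fun y hy => ?_⟩
    obtain ⟨t, rfl⟩ := hy
    exact (abs_le.1 (hcbound t)).2
  set L : ℝ := ⨆ t, ⟪v, x t⟫ with hL
  have htend : Tendsto (fun t => ⟪v, x t⟫) atTop (nhds L) :=
    tendsto_atTop_ciSup hmono hbdd
  have hL1 : L ≤ 1 := ciSup_le fun t => (abs_le.1 (hcbound t)).2
  have hLlb : -1 < L := by
    have h0 : ⟪v, x 0⟫ ≤ L := le_ciSup hbdd 0
    rw [hx0] at h0
    linarith
  have hSpos : 0 < 1 + 4 * α * L + 4 * α ^ 2 := by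
    nlinarith [sq_nonneg (1 - 2 * α), mul_pos hα (show (0:ℝ) < 1 + L by linarith)]
  set s : ℝ := Real.sqrt (1 + 4 * α * L + 4 * α ^ 2) with hs
  have hspos : 0 < s := Real.sqrt_pos.2 hSpos
  have hs2 : s ^ 2 = 1 + 4 * α * L + 4 * α ^ 2 := Real.sq_sqrt hSpos.le
  -- the map g
  have hgrep : ∀ t, ⟪v, x (t + 1)⟫
      = (1 + 2 * α * ⟪v, x t⟫) * (Real.sqrt (1 + 4 * α * ⟪v, x t⟫ + 4 * α ^ 2))⁻¹ := by
    intro t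
    rw [hcsucc t, ← hNsq t, Real.sqrt_sq (hNpos t).le]
    ring
  have hgc : ContinuousAt (fun y : ℝ => (1 + 2 * α * y) * (Real.sqrt (1 + 4 * α * y + 4 * α ^ 2))⁻¹) L := by
    apply ContinuousAt.mul
    · fun_prop
    · apply ContinuousAt.inv₀
      · exact Real.continuous_sqrt.continuousAt.comp (by fun_prop)
      · exact ne_of_gt hspos
  have htend1 : Tendsto (fun t => ⟪v, x (t + 1)⟫) atTop (nhds L) :=
    htend.comp (tendsto_add_atTop_nat 1)
  have htend2 : Tendsto (fun t => ⟪v, x (t + 1)⟫) atTop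
      (nhds ((1 + 2 * α * L) * s⁻¹)) := by
    have := hgc.tendsto.comp htend
    simpa [Function.comp_def, hgrep, hs] using this
  have heq' : (1 + 2 * α * L) * s⁻¹ = L := tendsto_nhds_unique htend2 htend1
  have heq : 1 + 2 * α * L = L * s := by
    field_simp at heq'
    linarith [heq']
  have hfact : (1 - L ^ 2) * (1 + 4 * α * L) = 0 := by
    linear_combination (1 + 2 * α * L + L * s) * heq + L ^ 2 * hs2
  have hLeq : L = 1 := by
    rcases mul_eq_zero.1 hfact with h | h
    · have h2 : (L - 1) * (L + 1) = 0 := by nlinarith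
      rcases mul_eq_zero.1 h2 with h3 | h3
      · linarith
      · linarith
    · exfalso
      have hLneg : L < 0 := by nlinarith
      nlinarith [mul_pos hspos (neg_pos.2 hLneg)]
  rw [← hLeq]
  exact htend
end
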